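/- Let c be a generic linear list and f its piecewise linear map. Let a, b, p, q be pairwise distinct items with A = f(a) < f(b) = B and A' = f(p) < f(q) = B', let [x, y] be the connected component of f^{-1}([A, B]) containing both a and b, and let [x', y'] be the connected component of f^{-1}([A', B']) containing both p and q. If [x, y] ⊆ [x', y'], then A' < A < B < B'. -/

import Mathlib

/-- The piecewise linear map determined by the list `c` (on the domain `[1,m]`). -/
noncomputable def plMap (c : ℕ → ℝ) (x : ℝ) : ℝ :=
  c (Int.floor x).toNat +
    (x - (Int.floor x : ℝ)) * (c ((Int.floor x).toNat + 1) - c (Int.floor x).toNat)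

/-- The set of points of the domain `[1,m]` with values in `[A,B]`. -/
def levelBand (m : ℕ) (c : ℕ → ℝ) (A B : ℝ) : Set ℝ :=
  {x : ℝ | x ∈ Set.Icc (1 : ℝ) (m : ℝ) ∧ plMap c x ∈ Set.Icc A B}

/-- The sublevel set of the map at `s`, within the domain `[1,m]`. -/
def sublevel (m : ℕ) (c : ℕ → ℝ) (s : ℝ) : Set ℝ :=
  {x : ℝ | x ∈ Set.Icc (1 : ℝ) (m : ℝ) ∧ plMap c x ≤ s}

/-- The support of the frame spanned by the items `a` and `b`: the connected component
of `f⁻¹([f a, f b])` (within the domain) containing `a`. -/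
def frameSupport (m : ℕ) (c : ℕ → ℝ) (a b : ℕ) : Set ℝ :=
  connectedComponentIn (levelBand m c (c a) (c b)) (a : ℝ)

/-- `W(a,b)` is a triple-panel window of the piecewise linear map of `c`:
`a` and `b` are items with `c a < c b` lying in a common connected component `[x,y]`
of `f⁻¹([c a, c b])`, and the value at the end of the support away from the mirror
equals `c a`. -/
def IsTPW (m : ℕ) (c : ℕ → ℝ) (a b : ℕ) : Prop :=
  1 ≤ a ∧ a ≤ m ∧ 1 ≤ b ∧ b ≤ m ∧ c a < c b ∧
  (b : ℝ) ∈ frameSupport m c a b ∧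
  (if a < b then plMap c (sSup (frameSupport m c a b)) = c a
   else plMap c (sInf (frameSupport m c a b)) = c a)

/-- `i` is an interior local minimum of the list `c`. -/
def IsLocMin (m : ℕ) (c : ℕ → ℝ) (i : ℕ) : Prop :=
  1 < i ∧ i < m ∧ c i < c (i - 1) ∧ c i < c (i + 1)

/-- `i` is an interior local maximum of the list `c`. -/
def IsLocMax (m : ℕ) (c : ℕ → ℝ) (i : ℕ) : Prop :=
  1 < i ∧ i < m ∧ c (i - 1) < c i ∧ c (i + 1) < c i

/-- `i` is a critical item that is a leaf: an endpoint or an interior local minimum. -/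
def IsCritLeaf (m : ℕ) (c : ℕ → ℝ) (i : ℕ) : Prop :=
  i = 1 ∨ i = m ∨ IsLocMin m c i

/-- `i` is a critical item of the list `c`. -/
def IsCritItem (m : ℕ) (c : ℕ → ℝ) (i : ℕ) : Prop :=
  IsCritLeaf m c i ∨ IsLocMax m c i

/-!
An item lying in the support of the frame of `p` and `q` lies in `f⁻¹([f p, f q])`, so its value is
in `[f p, f q]`; genericity makes the inequalities strict for items other than `p` and `q`.
Applying this to `a` and `b`, which lie in the smaller support, gives the claim.
-/

lemma plMap_natCast (c : ℕ → ℝ) (n : ℕ) : plMap c n = c n := by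
  simp [plMap]

lemma natCast_mem_levelBand_iff {m : ℕ} {c : ℕ → ℝ} {A B : ℝ} {n : ℕ} :
    (n : ℝ) ∈ levelBand m c A B ↔ (1 ≤ n ∧ n ≤ m) ∧ c n ∈ Set.Icc A B := by
  simp only [levelBand, Set.mem_ofPred_eq, Set.mem_Icc, plMap_natCast, Nat.one_le_cast,
    Nat.cast_le]

lemma natCast_mem_frameSupport_left {m : ℕ} {c : ℕ → ℝ} {a b : ℕ} (ha : a ∈ Set.Icc 1 m)
    (hab : c a ≤ c b) : (a : ℝ) ∈ frameSupport m c a b :=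
  mem_connectedComponentIn (natCast_mem_levelBand_iff.2 ⟨ha, le_rfl, hab⟩)

lemma apply_mem_Icc_of_natCast_mem_frameSupport {m : ℕ} {c : ℕ → ℝ} {p q n : ℕ}
    (hn : (n : ℝ) ∈ frameSupport m c p q) : c n ∈ Set.Icc (c p) (c q) :=
  (natCast_mem_levelBand_iff.1 (connectedComponentIn_subset _ _ hn)).2

theorem statement16_general (m : ℕ) (c : ℕ → ℝ)
    (hgen : Set.InjOn c (Set.Icc 1 m))
    (a b p q : ℕ)
    (ha1 : 1 ≤ a) (ham : a ≤ m) (hb1 : 1 ≤ b) (hbm : b ≤ m)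
    (hp1 : 1 ≤ p) (hpm : p ≤ m) (hq1 : 1 ≤ q) (hqm : q ≤ m)
    (hdist : List.Pairwise (· ≠ ·) [a, b, p, q])
    (hab : c a < c b)
    (hbin : (b : ℝ) ∈ frameSupport m c a b)
    (hsub : frameSupport m c a b ⊆ frameSupport m c p q) :
    c p < c a ∧ c a < c b ∧ c b < c q := by
  obtain ⟨⟨-, hap, -⟩, ⟨-, hbq⟩, -⟩ : (a ≠ b ∧ a ≠ p ∧ a ≠ q) ∧ (b ≠ p ∧ b ≠ q) ∧ p ≠ q := by
    simpa using hdist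
  have hA := apply_mem_Icc_of_natCast_mem_frameSupport
    (hsub (natCast_mem_frameSupport_left ⟨ha1, ham⟩ hab.le))
  have hB := apply_mem_Icc_of_natCast_mem_frameSupport (hsub hbin)
  refine ⟨hA.1.lt_of_ne fun h ↦ hap ?_, hab, hB.2.lt_of_ne fun h ↦ hbq ?_⟩
  · exact (hgen ⟨hp1, hpm⟩ ⟨ha1, ham⟩ h).symm
  · exact hgen ⟨hb1, hbm⟩ ⟨hq1, hqm⟩ h

/-- If the support of the frame spanned by `a` and `b` is contained
in the support of the frame spanned by `p` and `q`, then `c p < c a < c b < c q`. -/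
theorem statement16 (m : ℕ) (hm : 2 ≤ m) (c : ℕ → ℝ)
    (hgen : Set.InjOn c (Set.Icc 1 m))
    (a b p q : ℕ)
    (ha1 : 1 ≤ a) (ham : a ≤ m) (hb1 : 1 ≤ b) (hbm : b ≤ m)
    (hp1 : 1 ≤ p) (hpm : p ≤ m) (hq1 : 1 ≤ q) (hqm : q ≤ m)
    (hdist : List.Pairwise (· ≠ ·) [a, b, p, q])
    (hab : c a < c b) (hpq : c p < c q)
    (hbin : (b : ℝ) ∈ frameSupport m c a b)
    (hqin : (q : ℝ) ∈ frameSupport m c p q)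
    (hsub : frameSupport m c a b ⊆ frameSupport m c p q) :
    c p < c a ∧ c a < c b ∧ c b < c q :=
  statement16_general m c hgen a b p q ha1 ham hb1 hbm hp1 hpm hq1 hqm hdist hab hbin hsub
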